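/- arXiv:2510.04432 — 6 statements merged into one kernel-verified Lean document; each statement's English description precedes it below -/
import Mathlib

section
/- Let n, f̂, f be integers with 1 ≤ f̂ < f < n/2 and let κ > 0 be any real number. Then the scalar trimmed-mean aggregator TM_{f̂/n} : ℝⁿ → ℝ is not (f,κ)-robust. Concretely, for the input x₁ = ⋯ = x_{n−f} = 0, x_{n−f+1} = ⋯ = x_n = 1 and the set S = {1,…,n−f}, one has x̄_S = 0 and ∑_{i∈S}(x_i − x̄_S)² = 0, yet TM_{f̂/n}(x₁,…,x_n) = (f−f̂)/(n−2f̂) > 0, so the inequality |TM_{f̂/n}(x₁,…,x_n) − x̄_S|² ≤ (κ/|S|)∑_{i∈S}(x_i − x̄_S)² fails. -/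
/-!
On a monotone input the trimmed mean averages a fixed window of coordinates, so on the step
input with `n - f` zeros followed by `f` ones it equals `(f - f̂)/(n - 2f̂) > 0`. The first
`n - f` coordinates are all `0`, so they have mean `0` and zero spread: robustness would force
the output to be `0`.
-/

open Finset

/-- The scalar coordinate-wise trimmed mean `TM_{f̂/n}`: averages the `n - 2f̂` values
remaining after deleting the `f̂` smallest and `f̂` largest entries of `x₁, …, x_n`. -/
noncomputable def TM (n fhat : ℕ) (x : Fin n → ℝ) : ℝ :=
  ((n : ℝ) - 2 * fhat)⁻¹ *
    ∑ i ∈ Finset.univ.filter (fun i : Fin n => fhat ≤ (i : ℕ) ∧ (i : ℕ) < n - fhat),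
      x (Tuple.sort x i)

theorem Fin.card_filter_val_mem_Ico {n a b : ℕ} (hb : b ≤ n) :
    #{i : Fin n | a ≤ (i : ℕ) ∧ (i : ℕ) < b} = b - a := by
  rw [← Nat.card_Ico, ← card_map Fin.valEmbedding]
  congr 1
  ext k
  simp only [mem_map, mem_filter, mem_univ, true_and, Fin.valEmbedding_apply, mem_Ico]
  exact ⟨by rintro ⟨i, hi, rfl⟩; exact hi, fun hk => ⟨⟨k, by omega⟩, hk, rfl⟩⟩

theorem TM_of_monotone {n fhat : ℕ} {x : Fin n → ℝ} (hx : Monotone x) :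
    TM n fhat x = ((n : ℝ) - 2 * fhat)⁻¹ *
      ∑ i ∈ univ.filter (fun i : Fin n => fhat ≤ (i : ℕ) ∧ (i : ℕ) < n - fhat), x i := by
  rw [TM, Tuple.sort_eq_refl_iff_monotone.mpr hx]
  rfl

theorem TM_zero_one_step {n f fhat : ℕ} (hf : fhat ≤ f) (hfn : f + fhat ≤ n) :
    TM n fhat (fun i => if (i : ℕ) < n - f then 0 else 1) =
      ((f : ℝ) - fhat) / ((n : ℝ) - 2 * fhat) := by
  have hmono : Monotone fun i : Fin n => if (i : ℕ) < n - f then (0 : ℝ) else 1 := by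
    intro i j hij
    have : (i : ℕ) ≤ j := hij
    dsimp only
    split_ifs <;> first | omega | norm_num
  have hcount :
      #{i : Fin n | (fhat ≤ (i : ℕ) ∧ (i : ℕ) < n - fhat) ∧ ¬ (i : ℕ) < n - f} = f - fhat := by
    rw [show f - fhat = n - fhat - (n - f) by omega,
      ← Fin.card_filter_val_mem_Ico (n := n) (b := n - fhat) (by omega)]
    congr 1
    ext i
    simp only [mem_filter, mem_univ, true_and]
    omega
  rw [TM_of_monotone hmono, sum_ite, sum_const_zero, zero_add, sum_const, filter_filter, hcount,
    nsmul_one, Nat.cast_sub hf, div_eq_inv_mul]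

def IsRobust (n f : ℕ) (κ : ℝ) (A : (Fin n → ℝ) → ℝ) : Prop :=
  ∀ (x : Fin n → ℝ) (S : Finset (Fin n)), S.card = n - f →
    |A x - (S.card : ℝ)⁻¹ * ∑ i ∈ S, x i| ^ 2
      ≤ κ / (S.card : ℝ) * ∑ i ∈ S, |x i - (S.card : ℝ)⁻¹ * ∑ j ∈ S, x j| ^ 2

theorem not_isRobust_of_ne_of_eqOn {n f : ℕ} {κ : ℝ} {A : (Fin n → ℝ) → ℝ} {x : Fin n → ℝ}
    {S : Finset (Fin n)} {c : ℝ} (hS : S.card = n - f) (hne : S.Nonempty)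
    (hx : ∀ i ∈ S, x i = c) (hA : A x ≠ c) : ¬ IsRobust n f κ A := by
  intro hrob
  have hmean : (S.card : ℝ)⁻¹ * ∑ i ∈ S, x i = c := by
    rw [sum_congr rfl hx, sum_const, nsmul_eq_mul,
      inv_mul_cancel_left₀ (Nat.cast_ne_zero.mpr hne.card_pos.ne')]
  have hspread : ∑ i ∈ S, |x i - (S.card : ℝ)⁻¹ * ∑ j ∈ S, x j| ^ 2 = 0 :=
    sum_eq_zero fun i hi => by simp [hmean, hx i hi]
  have := hrob x S hS
  rw [hspread, mul_zero, hmean, sq_abs] at this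
  exact hA (sub_eq_zero.mp ((pow_eq_zero_iff two_ne_zero).mp (le_antisymm this (sq_nonneg _))))

theorem stmt_0_general (n f fhat : ℕ) (hlt : fhat < f) (hn : 2 * f < n)
    (κ : ℝ) :
    (TM n fhat (fun i : Fin n => if (i : ℕ) < n - f then (0 : ℝ) else 1)
        = ((f : ℝ) - fhat) / ((n : ℝ) - 2 * fhat)) ∧
    (0 : ℝ) < ((f : ℝ) - fhat) / ((n : ℝ) - 2 * fhat) ∧
    ¬ (∀ (x : Fin n → ℝ) (S : Finset (Fin n)), S.card = n - f →
        |TM n fhat x - (S.card : ℝ)⁻¹ * ∑ i ∈ S, x i| ^ 2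
          ≤ κ / (S.card : ℝ) * ∑ i ∈ S, |x i - (S.card : ℝ)⁻¹ * ∑ j ∈ S, x j| ^ 2) := by
  have hTM := TM_zero_one_step (n := n) hlt.le (by omega)
  have hpos : (0 : ℝ) < ((f : ℝ) - fhat) / ((n : ℝ) - 2 * fhat) := by
    have : (fhat : ℝ) < f := by exact_mod_cast hlt
    have : (2 * f : ℝ) < n := by exact_mod_cast hn
    apply div_pos <;> linarith
  refine ⟨hTM, hpos, ?_⟩
  have hS : #{i : Fin n | (i : ℕ) < n - f} = n - f := by
    rw [Fin.card_filter_val_lt]; omega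
  exact not_isRobust_of_ne_of_eqOn (c := 0) hS (card_pos.mp (by omega))
    (fun i hi => if_pos (mem_filter.mp hi).2) (hTM ▸ hpos.ne')

/-- If `1 ≤ f̂ < f < n/2` and `κ > 0`, then `TM_{f̂/n}` is not `(f,κ)`-robust: on the input
`x₁ = ⋯ = x_{n-f} = 0`, `x_{n-f+1} = ⋯ = x_n = 1` it outputs `(f - f̂)/(n - 2f̂) > 0`,
while for `S = {1, …, n-f}` one has `x̄_S = 0` and `∑_{i∈S} (x_i - x̄_S)² = 0`, so the
robustness inequality fails. -/
theorem stmt_0 (n f fhat : ℕ) (hfhat : 1 ≤ fhat) (hlt : fhat < f) (hn : 2 * f < n)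
    (κ : ℝ) (hκ : 0 < κ) :
    (TM n fhat (fun i : Fin n => if (i : ℕ) < n - f then (0 : ℝ) else 1)
        = ((f : ℝ) - fhat) / ((n : ℝ) - 2 * fhat)) ∧
    (0 : ℝ) < ((f : ℝ) - fhat) / ((n : ℝ) - 2 * fhat) ∧
    ¬ (∀ (x : Fin n → ℝ) (S : Finset (Fin n)), S.card = n - f →
        |TM n fhat x - (S.card : ℝ)⁻¹ * ∑ i ∈ S, x i| ^ 2
          ≤ κ / (S.card : ℝ) * ∑ i ∈ S, |x i - (S.card : ℝ)⁻¹ * ∑ j ∈ S, x j| ^ 2) :=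
  stmt_0_general n f fhat hlt hn κ
end

section
/- Let n, d ≥ 1 and let f, f̂ be integers with 0 ≤ f ≤ f̂ < n/2. Consider the composite aggregator (f̂-Krum)∘(f̂-NNM): given x₁,…,x_n ∈ ℝ^d, for each k ∈ {1,…,n} choose a set N_k of (n−f̂) nearest neighbors of x_k among x₁,…,x_n and set y_k = (1/(n−f̂))∑_{i∈N_k} x_i; then for each k choose a set M_k of (n−f̂) nearest neighbors of y_k among y₁,…,y_n, let k* ∈ argmin_{k∈{1,…,n}} ∑_{i∈M_k}‖y_i − y_k‖², and output y_{k*}. Then for every such choice of nearest-neighbor sets, every S ⊆ {1,…,n} with |S| = n − f satisfies ‖y_{k*} − x̄_S‖² ≤ (84f̂/(n−f−f̂))·(1/|S|)∑_{i∈S}‖x_i − x̄_S‖²; that is, the composite aggregator is (f,κ)-robust with κ = 84f̂/(n−f−f̂). -/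
/-!
Let `c` be the mean of the honest inputs `x_i`, `i ∈ S`, and `T = ∑_{i ∈ S} ‖x_i - c‖²`.

Mixing. For honest `k` and any pivot `p`,
`(n - f̂)(y_k - c) = ∑_{N_k \ S} (x_i - p) - ∑_{S \ N_k} (x_j - p) + (|N_k \ S| - |S \ N_k|)(p - c)`
(the honest deviations from `c` sum to zero), and every `x_i` with `i ∈ N_k \ S` is at least as close
to `x_k` as every `x_j` with `j ∈ S \ N_k`. The pivots `p = c` and `p = x_k` give two bounds on
`∑_{k ∈ S} ‖y_k - c‖²`; the first is good when `f` is small compared to `f̂`, the second otherwise,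
and together they give `17 (n - f) ∑_{k ∈ S} ‖y_k - c‖² ≤ 245 f̂ T`.

Krum. By averaging, some honest `k₀` has `∑_{j ∈ S} ‖y_j - y_{k₀}‖² ≤ 2 ∑_{j ∈ S} ‖y_j - c‖²`,
and this bounds the score of `k₀`, hence the minimal score. At least `n - f - f̂` of the
neighbours `M_{k*}` are honest, and Young's inequality through each of them gives
`(n - f - f̂) ‖y_{k*} - c‖² ≤ (204/35) ∑_{k ∈ S} ‖y_k - c‖²`. Finally `(204/35)(245/17) = 84`.
-/

open Finset

/-- `N` is a set of `(n - f̂)` nearest neighbors of `z_k` among `z₁, …, z_n`: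
`|N| = n - f̂` and every point indexed in `N` is at least as close to `z_k` as
every point indexed outside `N`. -/
def IsNN (n d fhat : ℕ) (z : Fin n → EuclideanSpace ℝ (Fin d)) (k : Fin n)
    (N : Finset (Fin n)) : Prop :=
  N.card = n - fhat ∧ ∀ i ∈ N, ∀ j ∉ N, ‖z i - z k‖ ≤ ‖z j - z k‖

theorem add_sq_le_of_pos {a b t : ℝ} (ht : 0 < t) :
    (a + b) ^ 2 ≤ (1 + t) * a ^ 2 + (1 + t⁻¹) * b ^ 2 := by
  have key : (1 + t) * a ^ 2 + (1 + t⁻¹) * b ^ 2 - (a + b) ^ 2 = (t * a - b) ^ 2 / t := by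
    field_simp
    ring
  have : 0 ≤ (t * a - b) ^ 2 / t := by positivity
  linarith

theorem mul_one_add_div_sq_le {u v F H : ℝ} (hv : 0 ≤ v) (huH : u ≤ H) (hFH : F ≤ H)
    (huv : u - v = H - F) : (1 + v / u) ^ 2 * u ≤ (H + F) ^ 2 / H := by
  rcases (show 0 ≤ u by linarith).eq_or_lt with rfl | hu
  · simp only [mul_zero]
    positivity
  rw [show (1 + v / u) ^ 2 * u = (u + v) ^ 2 / u by field_simp,
    div_le_div_iff₀ hu (hu.trans_le huH)]
  obtain rfl : v = u - (H - F) := by linarith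
  have key : (H + F) ^ 2 * u - (u + (u - (H - F))) ^ 2 * H
      = (H - u) * (4 * u * H - (H - F) ^ 2) := by ring
  have : (H - F) ^ 2 ≤ 4 * u * H := by nlinarith
  linarith [mul_nonneg (sub_nonneg.2 huH) (sub_nonneg.2 this)]

-- In the variables `t = 5H - 8F ≥ 0` and `a = ν - 2H ≥ 0` every coefficient of the difference
-- is nonnegative.
theorem nnm_poly_le_of_eight_mul_le {F H ν : ℝ} (hF : 0 ≤ F) (hFH : 8 * F ≤ 5 * H)
    (hHν : 2 * H ≤ ν) :
    17 * (H + F) ^ 2 * (ν - F) ^ 2 + 102 * F ^ 2 * H * (ν - F) ≤ 147 * H ^ 2 * (ν - H) ^ 2 := by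
  obtain ⟨t, ht, rfl⟩ : ∃ t, 0 ≤ t ∧ H = (8 * F + t) / 5 := ⟨5 * H - 8 * F, by linarith, by ring⟩
  obtain ⟨a, ha, rfl⟩ : ∃ a, 0 ≤ a ∧ ν = a + 2 * ((8 * F + t) / 5) :=
    ⟨_, sub_nonneg.2 hHν, by ring⟩
  lift F to NNReal using hF
  lift t to NNReal using ht
  lift a to NNReal using ha
  rw [← sub_nonneg]
  ring_nf
  positivity

-- Likewise in the variables `r = 8F - 5H`, `w = H - F` and `a = ν - 2H`.
theorem nnm_poly_le_of_five_mul_le {F H ν : ℝ} (hFH : F ≤ H) (hHF : 5 * H ≤ 8 * F)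
    (hHν : 2 * H ≤ ν) :
    272 * (H + F) ^ 2 * (ν - F) ^ 2 + 952 * (H - F) ^ 2 * H * (ν - F)
      ≤ 1715 * H ^ 2 * (ν - H) ^ 2 := by
  obtain ⟨r, w, hr, hw, rfl, rfl⟩ :
      ∃ r w, 0 ≤ r ∧ 0 ≤ w ∧ F = (r + 5 * w) / 3 ∧ H = (r + 8 * w) / 3 :=
    ⟨8 * F - 5 * H, H - F, by linarith, by linarith, by ring, by ring⟩
  obtain ⟨a, ha, rfl⟩ : ∃ a, 0 ≤ a ∧ ν = a + 2 * ((r + 8 * w) / 3) :=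
    ⟨_, sub_nonneg.2 hHν, by ring⟩
  lift r to NNReal using hr
  lift w to NNReal using hw
  lift a to NNReal using ha
  rw [← sub_nonneg]
  ring_nf
  positivity

theorem nnm_mul_le_of_bounds {F H ν Y T : ℝ} (hF : 0 ≤ F) (hFH : F ≤ H) (hHν : 2 * H ≤ ν)
    (hT : 0 ≤ T)
    (hA : (ν - H) ^ 2 * Y ≤ 5 / 3 * ((H + F) ^ 2 / H) * (ν - F) * T + 10 * F ^ 2 * T)
    (hB : (ν - H) ^ 2 * Y ≤ 16 / 7 * ((H + F) ^ 2 / H) * (ν - F) * T + 8 * (H - F) ^ 2 * T) :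
    17 * (ν - F) * Y ≤ 245 * H * T := by
  rcases (hF.trans hFH).eq_or_lt with rfl | hH
  · obtain rfl : F = 0 := le_antisymm hFH hF
    simp only [sub_zero, add_zero, div_zero, mul_zero, zero_mul] at hA hHν ⊢
    rcases hHν.eq_or_lt with rfl | hν
    · simp
    · nlinarith
  have hC : (H + F) ^ 2 / H * H = (H + F) ^ 2 := div_mul_cancel₀ _ hH.ne'
  have hνF : 0 ≤ ν - F := by linarith
  refine le_of_mul_le_mul_left ?_ (mul_pos hH (pow_pos (by linarith) 2) : 0 < H * (ν - H) ^ 2)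
  rcases le_total (8 * F) (5 * H) with h | h
  · have hp := mul_le_mul_of_nonneg_right (nnm_poly_le_of_eight_mul_le hF h hHν) hT
    have hA' := mul_le_mul_of_nonneg_left hA (by positivity : 0 ≤ 17 * (ν - F) * H)
    linear_combination hA' + 5 / 3 * hp + 85 / 3 * (ν - F) ^ 2 * T * hC
  · have hp := mul_le_mul_of_nonneg_right (nnm_poly_le_of_five_mul_le hFH h hHν) hT
    have hB' := mul_le_mul_of_nonneg_left hB (by positivity : 0 ≤ 17 * (ν - F) * H)
    linear_combination hB' + 1 / 7 * hp + 272 / 7 * (ν - F) ^ 2 * T * hC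

section

variable {ι E : Type*}

theorem norm_sub_sq_le_of_pos [SeminormedAddCommGroup E] (a b c : E) {t : ℝ} (ht : 0 < t) :
    ‖a - c‖ ^ 2 ≤ (1 + t) * ‖a - b‖ ^ 2 + (1 + t⁻¹) * ‖b - c‖ ^ 2 :=
  (pow_le_pow_left₀ (norm_nonneg _) (norm_sub_le_norm_sub_add_norm_sub a b c) 2).trans
    (add_sq_le_of_pos ht)

theorem sum_le_sum_of_forall_le_of_card_le {A B : Finset ι} {a b : ι → ℝ} (hAB : #A ≤ #B)
    (hb : ∀ j ∈ B, 0 ≤ b j) (hab : ∀ i ∈ A, ∀ j ∈ B, a i ≤ b j) :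
    ∑ i ∈ A, a i ≤ ∑ j ∈ B, b j := by
  rcases B.eq_empty_or_nonempty with rfl | hB
  · simp [card_eq_zero.1 (Nat.le_zero.1 hAB)]
  have hcross : (#B : ℝ) * ∑ i ∈ A, a i ≤ #A * ∑ j ∈ B, b j :=
    calc (#B : ℝ) * ∑ i ∈ A, a i = ∑ i ∈ A, ∑ _j ∈ B, a i := by simp [mul_sum]
      _ ≤ ∑ _i ∈ A, ∑ j ∈ B, b j := sum_le_sum fun i hi => sum_le_sum fun j hj => hab i hi j hj
      _ = #A * ∑ j ∈ B, b j := by simp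
  refine le_of_mul_le_mul_left (hcross.trans ?_) (by exact_mod_cast hB.card_pos)
  gcongr
  exact sum_nonneg hb

theorem cast_card_sdiff_sub_cast_card_sdiff [DecidableEq ι] (S N : Finset ι) :
    (#(S \ N) : ℝ) - #(N \ S) = #S - #N := by
  rw [← card_sdiff_add_card_inter S N, ← card_sdiff_add_card_inter N S, inter_comm]
  push_cast
  ring

section NearestNeighbors

variable [DecidableEq ι] [SeminormedAddCommGroup E]

theorem sum_sq_norm_sub_le_of_nearest {z : ι → E} {k : ι} {M S : Finset ι}
    (hM : ∀ i ∈ M, ∀ j ∉ M, ‖z i - z k‖ ≤ ‖z j - z k‖) (hMS : #M ≤ #S) :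
    ∑ i ∈ M, ‖z i - z k‖ ^ 2 ≤ ∑ i ∈ S, ‖z i - z k‖ ^ 2 := by
  rw [← sum_inter_add_sum_sdiff M S, ← sum_inter_add_sum_sdiff S M, inter_comm]
  gcongr 1
  exact sum_le_sum_of_forall_le_of_card_le (card_sdiff_le_card_sdiff_iff.2 hMS)
    (fun _ _ => sq_nonneg _) fun i hi j hj =>
      pow_le_pow_left₀ (norm_nonneg _) (hM i (mem_sdiff.1 hi).1 j (mem_sdiff.1 hj).2) 2

end NearestNeighbors

section Variance

variable [NormedAddCommGroup E] [InnerProductSpace ℝ E]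

theorem sum_sq_norm_sub_eq_of_sum_sub_eq_zero {z : ι → E} {S : Finset ι} {c : E}
    (hc : ∑ i ∈ S, (z i - c) = 0) (b : E) :
    ∑ i ∈ S, ‖z i - b‖ ^ 2 = ∑ i ∈ S, ‖z i - c‖ ^ 2 + #S * ‖c - b‖ ^ 2 := by
  have hsplit : ∀ i, ‖z i - b‖ ^ 2
      = ‖z i - c‖ ^ 2 + 2 * inner ℝ (z i - c) (c - b) + ‖c - b‖ ^ 2 := fun i => by
    rw [← norm_add_sq_real, sub_add_sub_cancel]
  simp_rw [hsplit, sum_add_distrib, ← mul_sum, ← sum_inner, hc, inner_zero_left, sum_const,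
    nsmul_eq_mul]
  ring

theorem sum_sub_inv_card_smul_sum_eq_zero (S : Finset ι) (z : ι → E) :
    ∑ i ∈ S, (z i - (#S : ℝ)⁻¹ • ∑ j ∈ S, z j) = 0 := by
  rcases S.eq_empty_or_nonempty with rfl | hS
  · simp
  rw [sum_sub_distrib, sum_const, ← Nat.cast_smul_eq_nsmul ℝ,
    smul_inv_smul₀ (by exact_mod_cast hS.card_pos.ne'), sub_self]

theorem sum_sq_norm_sub_le_of_sum_sub_eq_zero {z : ι → E} {S : Finset ι} {c : E}
    (hc : ∑ i ∈ S, (z i - c) = 0) (b : E) :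
    ∑ i ∈ S, ‖z i - c‖ ^ 2 ≤ ∑ i ∈ S, ‖z i - b‖ ^ 2 := by
  rw [sum_sq_norm_sub_eq_of_sum_sub_eq_zero hc b]
  have : 0 ≤ (#S : ℝ) * ‖c - b‖ ^ 2 := by positivity
  linarith

theorem sum_sum_sq_norm_sub_eq {z : ι → E} {S : Finset ι} {c : E}
    (hc : ∑ i ∈ S, (z i - c) = 0) :
    ∑ k ∈ S, ∑ j ∈ S, ‖z j - z k‖ ^ 2 = 2 * #S * ∑ j ∈ S, ‖z j - c‖ ^ 2 := by
  rw [sum_congr rfl fun k _ => sum_sq_norm_sub_eq_of_sum_sub_eq_zero hc (z k), sum_add_distrib,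
    ← mul_sum]
  simp_rw [norm_sub_rev c, sum_const, nsmul_eq_mul]
  ring

theorem exists_mem_sum_sq_norm_sub_le {z : ι → E} {S : Finset ι} (hS : S.Nonempty) (b : E) :
    ∃ k ∈ S, ∑ j ∈ S, ‖z j - z k‖ ^ 2 ≤ 2 * ∑ j ∈ S, ‖z j - b‖ ^ 2 := by
  have hc := sum_sub_inv_card_smul_sum_eq_zero S z
  refine exists_le_of_sum_le hS ?_
  rw [sum_sum_sq_norm_sub_eq hc, sum_const, nsmul_eq_mul]
  have hb := mul_le_mul_of_nonneg_left (sum_sq_norm_sub_le_of_sum_sub_eq_zero hc b)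
    (by positivity : (0 : ℝ) ≤ 2 * #S)
  linarith

end Variance

section Krum

variable [DecidableEq ι] [NormedAddCommGroup E] [InnerProductSpace ℝ E]

theorem card_inter_mul_sq_norm_sub_le_of_krum {y : ι → E} {M : ι → Finset ι} {S : Finset ι}
    {kstar : ι} (hM : ∀ k, ∀ i ∈ M k, ∀ j ∉ M k, ‖y i - y k‖ ≤ ‖y j - y k‖)
    (hMS : ∀ k ∈ S, #(M k) ≤ #S)
    (hks : ∀ k ∈ S, ∑ i ∈ M kstar, ‖y i - y kstar‖ ^ 2 ≤ ∑ i ∈ M k, ‖y i - y k‖ ^ 2) (c : E) :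
    #(M kstar ∩ S) * ‖y kstar - c‖ ^ 2 ≤ 204 / 35 * ∑ k ∈ S, ‖y k - c‖ ^ 2 := by
  rcases S.eq_empty_or_nonempty with rfl | hS
  · simp
  obtain ⟨k₀, hk₀, hk₀c⟩ := exists_mem_sum_sq_norm_sub_le (z := y) hS c
  have hscore : ∑ i ∈ M kstar, ‖y i - y kstar‖ ^ 2 ≤ 2 * ∑ k ∈ S, ‖y k - c‖ ^ 2 :=
    (hks k₀ hk₀).trans ((sum_sq_norm_sub_le_of_nearest (hM k₀) (hMS k₀ hk₀)).trans hk₀c)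
  -- `t = 7/10 ≈ 1/√2` nearly minimises the resulting factor `2 (1 + t) + (1 + t⁻¹)`
  have hyoung : ∀ i,
      ‖y kstar - c‖ ^ 2 ≤ 17 / 10 * ‖y i - y kstar‖ ^ 2 + 17 / 7 * ‖y i - c‖ ^ 2 := fun i => by
    have := norm_sub_sq_le_of_pos (y kstar) (y i) c (t := 7 / 10) (by norm_num)
    rw [norm_sub_rev (y kstar) (y i)] at this
    norm_num at this
    exact this
  calc (#(M kstar ∩ S) : ℝ) * ‖y kstar - c‖ ^ 2 = ∑ _i ∈ M kstar ∩ S, ‖y kstar - c‖ ^ 2 := by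
        simp
    _ ≤ ∑ i ∈ M kstar ∩ S, (17 / 10 * ‖y i - y kstar‖ ^ 2 + 17 / 7 * ‖y i - c‖ ^ 2) :=
        sum_le_sum fun i _ => hyoung i
    _ = 17 / 10 * ∑ i ∈ M kstar ∩ S, ‖y i - y kstar‖ ^ 2
          + 17 / 7 * ∑ i ∈ M kstar ∩ S, ‖y i - c‖ ^ 2 := by
        rw [sum_add_distrib, mul_sum, mul_sum]
    _ ≤ 17 / 10 * ∑ i ∈ M kstar, ‖y i - y kstar‖ ^ 2 + 17 / 7 * ∑ k ∈ S, ‖y k - c‖ ^ 2 := by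
        gcongr
        exacts [inter_subset_left, inter_subset_right]
    _ ≤ 204 / 35 * ∑ k ∈ S, ‖y k - c‖ ^ 2 := by linarith

end Krum

section Mixing

variable [DecidableEq ι]

section Seminormed

variable [SeminormedAddCommGroup E] [NormedSpace ℝ E]
  {x : ι → E} {S N : Finset ι} {c : E} {k : ι}

theorem sum_sub_eq_sum_sdiff_sub_sum_sdiff (hc : ∑ i ∈ S, (x i - c) = 0) (p : E) :
    ∑ i ∈ N, (x i - c) = ∑ i ∈ N \ S, (x i - p) - ∑ j ∈ S \ N, (x j - p)
      + ((#(N \ S) : ℝ) - #(S \ N)) • (p - c) := by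
  have hshift : ∀ A : Finset ι, ∑ i ∈ A, (x i - c) = ∑ i ∈ A, (x i - p) + (#A : ℝ) • (p - c) :=
    fun A => by
      rw [Nat.cast_smul_eq_nsmul, ← sum_const, ← sum_add_distrib]
      simp only [sub_add_sub_cancel]
  have hSN := sum_inter_add_sum_sdiff S N (fun i => x i - c)
  rw [hc] at hSN
  rw [← sum_inter_add_sum_sdiff N S, inter_comm, eq_neg_of_add_eq_zero_left hSN, hshift (N \ S),
    hshift (S \ N), sub_smul]
  abel

theorem norm_sum_sub_le (hc : ∑ i ∈ S, (x i - c) = 0)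
    (hN : ∀ i ∈ N, ∀ j ∉ N, ‖x i - x k‖ ≤ ‖x j - x k‖) (hNS : #N ≤ #S) (p : E) :
    ‖∑ i ∈ N, (x i - c)‖ ≤ (1 + #(N \ S) / #(S \ N)) * ∑ j ∈ S \ N, ‖x j - p‖
      + (2 * #(N \ S) * ‖x k - p‖ + (#(S \ N) - #(N \ S)) * ‖p - c‖) := by
  set u : ℝ := (#(S \ N) : ℝ)
  set v : ℝ := (#(N \ S) : ℝ)
  set P := ∑ j ∈ S \ N, ‖x j - p‖
  have hvu : v ≤ u := Nat.cast_le.2 (card_sdiff_le_card_sdiff_iff.2 hNS)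
  have hbad : ∀ i ∈ N \ S, ‖x i - p‖ ≤ P / u + 2 * ‖x k - p‖ := by
    intro i hi
    have hu : 0 < u := by
      have : 0 < v := Nat.cast_pos.2 (card_pos.2 ⟨i, hi⟩)
      linarith
    have hnear : u * ‖x i - x k‖ ≤ P + u * ‖x k - p‖ := by
      calc u * ‖x i - x k‖ ≤ ∑ j ∈ S \ N, ‖x j - x k‖ := by
            rw [← nsmul_eq_mul]
            exact card_nsmul_le_sum _ _ _ fun j hj =>
              hN i (mem_sdiff.1 hi).1 j (mem_sdiff.1 hj).2
        _ ≤ ∑ j ∈ S \ N, (‖x j - p‖ + ‖x k - p‖) := sum_le_sum fun j _ => by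
            rw [norm_sub_rev (x k) p]
            exact norm_sub_le_norm_sub_add_norm_sub _ _ _
        _ = P + u * ‖x k - p‖ := by rw [sum_add_distrib, sum_const, nsmul_eq_mul]
    have htri := norm_sub_le_norm_sub_add_norm_sub (x i) (x k) p
    rw [div_add' _ _ _ hu.ne', le_div_iff₀ hu]
    linarith [mul_le_mul_of_nonneg_left htri hu.le]
  have hbadsum : ∑ i ∈ N \ S, ‖x i - p‖ ≤ v / u * P + 2 * v * ‖x k - p‖ := by
    refine (sum_le_card_nsmul _ _ _ hbad).trans_eq ?_
    rw [nsmul_eq_mul]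
    ring
  rw [sum_sub_eq_sum_sdiff_sub_sum_sdiff hc p]
  calc ‖∑ i ∈ N \ S, (x i - p) - ∑ j ∈ S \ N, (x j - p) + (v - u) • (p - c)‖
      ≤ ∑ i ∈ N \ S, ‖x i - p‖ + P + (u - v) * ‖p - c‖ := by
        refine (norm_add_le _ _).trans (add_le_add ((norm_sub_le _ _).trans
          (add_le_add (norm_sum_le _ _) (norm_sum_le _ _))) ?_)
        rw [norm_smul, Real.norm_eq_abs, abs_of_nonpos (by linarith)]
        simp
    _ ≤ (1 + v / u) * P + (2 * v * ‖x k - p‖ + (u - v) * ‖p - c‖) := by linarith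

theorem sq_norm_sum_sub_le (hc : ∑ i ∈ S, (x i - c) = 0)
    (hN : ∀ i ∈ N, ∀ j ∉ N, ‖x i - x k‖ ≤ ‖x j - x k‖) {F H t : ℝ} (hFH : F ≤ H)
    (hu : (#(S \ N) : ℝ) ≤ H) (huv : (#(S \ N) : ℝ) - #(N \ S) = H - F) (ht : 0 < t) (p : E) :
    ‖∑ i ∈ N, (x i - c)‖ ^ 2 ≤ (1 + t) * ((H + F) ^ 2 / H) * ∑ j ∈ S \ N, ‖x j - p‖ ^ 2
      + (1 + t⁻¹) * (2 * #(N \ S) * ‖x k - p‖ + (H - F) * ‖p - c‖) ^ 2 := by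
  have hNS : #N ≤ #S := card_sdiff_le_card_sdiff_iff.1 ((Nat.cast_le (α := ℝ)).1 (by linarith))
  have hbound := norm_sum_sub_le hc hN hNS p
  rw [huv] at hbound
  have hcoef := mul_one_add_div_sq_le (Nat.cast_nonneg #(N \ S)) hu hFH huv
  have hsum : ((1 + #(N \ S) / #(S \ N)) * ∑ j ∈ S \ N, ‖x j - p‖) ^ 2
      ≤ (H + F) ^ 2 / H * ∑ j ∈ S \ N, ‖x j - p‖ ^ 2 :=
    calc ((1 + #(N \ S) / #(S \ N)) * ∑ j ∈ S \ N, ‖x j - p‖) ^ 2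
        = (1 + (#(N \ S) : ℝ) / #(S \ N)) ^ 2 * (∑ j ∈ S \ N, ‖x j - p‖) ^ 2 := mul_pow _ _ _
      _ ≤ (1 + (#(N \ S) : ℝ) / #(S \ N)) ^ 2 * (#(S \ N) * ∑ j ∈ S \ N, ‖x j - p‖ ^ 2) := by
        gcongr
        exact sq_sum_le_card_mul_sum_sq
      _ ≤ (H + F) ^ 2 / H * ∑ j ∈ S \ N, ‖x j - p‖ ^ 2 := by
        rw [← mul_assoc]
        gcongr
  calc ‖∑ i ∈ N, (x i - c)‖ ^ 2
      ≤ ((1 + #(N \ S) / #(S \ N)) * ∑ j ∈ S \ N, ‖x j - p‖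
          + (2 * #(N \ S) * ‖x k - p‖ + (H - F) * ‖p - c‖)) ^ 2 :=
        pow_le_pow_left₀ (norm_nonneg _) hbound 2
    _ ≤ (1 + t) * ((1 + #(N \ S) / #(S \ N)) * ∑ j ∈ S \ N, ‖x j - p‖) ^ 2
          + (1 + t⁻¹) * (2 * #(N \ S) * ‖x k - p‖ + (H - F) * ‖p - c‖) ^ 2 := add_sq_le_of_pos ht
    _ ≤ _ := by
        rw [mul_assoc (1 + t)]
        gcongr

end Seminormed

section InnerProduct

variable [NormedAddCommGroup E] [InnerProductSpace ℝ E] {x : ι → E} {S : Finset ι} {c : E}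
  {N : ι → Finset ι} {F H : ℝ}

theorem sum_sq_norm_sum_sub_le_of_center (hc : ∑ i ∈ S, (x i - c) = 0)
    (hN : ∀ k ∈ S, ∀ i ∈ N k, ∀ j ∉ N k, ‖x i - x k‖ ≤ ‖x j - x k‖) (hFH : F ≤ H)
    (hu : ∀ k ∈ S, (#(S \ N k) : ℝ) ≤ H) (huv : ∀ k ∈ S, (#(S \ N k) : ℝ) - #(N k \ S) = H - F) :
    ∑ k ∈ S, ‖∑ i ∈ N k, (x i - c)‖ ^ 2
      ≤ 5 / 3 * ((H + F) ^ 2 / H) * #S * ∑ i ∈ S, ‖x i - c‖ ^ 2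
        + 10 * F ^ 2 * ∑ i ∈ S, ‖x i - c‖ ^ 2 := by
  have hk : ∀ k ∈ S, ‖∑ i ∈ N k, (x i - c)‖ ^ 2
      ≤ 5 / 3 * ((H + F) ^ 2 / H) * ∑ i ∈ S, ‖x i - c‖ ^ 2 + 10 * F ^ 2 * ‖x k - c‖ ^ 2 := by
    intro k hkS
    have hv : (#(N k \ S) : ℝ) ≤ F := by linarith [hu k hkS, huv k hkS]
    have hH : 0 ≤ H := (Nat.cast_nonneg _).trans (hu k hkS)
    have h := sq_norm_sum_sub_le hc (hN k hkS) hFH (hu k hkS) (huv k hkS) (t := 2 / 3)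
      (by norm_num) c
    rw [sub_self, norm_zero, mul_zero, add_zero] at h
    have hE : ∑ j ∈ S \ N k, ‖x j - c‖ ^ 2 ≤ ∑ i ∈ S, ‖x i - c‖ ^ 2 :=
      sum_le_sum_of_subset_of_nonneg sdiff_subset fun _ _ _ => sq_nonneg _
    have hv2 : (2 * #(N k \ S) * ‖x k - c‖) ^ 2 ≤ 4 * F ^ 2 * ‖x k - c‖ ^ 2 :=
      calc (2 * #(N k \ S) * ‖x k - c‖) ^ 2 = 4 * (#(N k \ S) : ℝ) ^ 2 * ‖x k - c‖ ^ 2 := by ring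
        _ ≤ 4 * F ^ 2 * ‖x k - c‖ ^ 2 := by gcongr
    have := mul_le_mul_of_nonneg_left hE (by positivity : 0 ≤ (H + F) ^ 2 / H)
    linarith
  refine (sum_le_sum hk).trans_eq ?_
  rw [sum_add_distrib, sum_const, nsmul_eq_mul, ← mul_sum]
  ring

theorem sum_sq_norm_sum_sub_le_of_self (hc : ∑ i ∈ S, (x i - c) = 0)
    (hN : ∀ k ∈ S, ∀ i ∈ N k, ∀ j ∉ N k, ‖x i - x k‖ ≤ ‖x j - x k‖) (hFH : F ≤ H)
    (hu : ∀ k ∈ S, (#(S \ N k) : ℝ) ≤ H) (huv : ∀ k ∈ S, (#(S \ N k) : ℝ) - #(N k \ S) = H - F) :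
    ∑ k ∈ S, ‖∑ i ∈ N k, (x i - c)‖ ^ 2
      ≤ 16 / 7 * ((H + F) ^ 2 / H) * #S * ∑ i ∈ S, ‖x i - c‖ ^ 2
        + 8 * (H - F) ^ 2 * ∑ i ∈ S, ‖x i - c‖ ^ 2 := by
  have hk : ∀ k ∈ S, ‖∑ i ∈ N k, (x i - c)‖ ^ 2
      ≤ 8 / 7 * ((H + F) ^ 2 / H) * ∑ j ∈ S, ‖x j - x k‖ ^ 2
        + 8 * (H - F) ^ 2 * ‖x k - c‖ ^ 2 := by
    intro k hkS
    have hH : 0 ≤ H := (Nat.cast_nonneg _).trans (hu k hkS)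
    have h := sq_norm_sum_sub_le hc (hN k hkS) hFH (hu k hkS) (huv k hkS) (t := 1 / 7)
      (by norm_num) (x k)
    rw [sub_self, norm_zero, mul_zero, zero_add, mul_pow] at h
    have hW : ∑ j ∈ S \ N k, ‖x j - x k‖ ^ 2 ≤ ∑ j ∈ S, ‖x j - x k‖ ^ 2 :=
      sum_le_sum_of_subset_of_nonneg sdiff_subset fun _ _ _ => sq_nonneg _
    have := mul_le_mul_of_nonneg_left hW (by positivity : 0 ≤ (H + F) ^ 2 / H)
    linarith
  refine (sum_le_sum hk).trans_eq ?_
  rw [sum_add_distrib, ← mul_sum, ← mul_sum, sum_sum_sq_norm_sub_eq hc]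
  ring

theorem card_mul_sum_sq_norm_nnm_sub_le [Fintype ι] {f fhat : ℕ} (hf : f ≤ fhat)
    (hfn : 2 * fhat < Fintype.card ι) {x y : ι → E} {N : ι → Finset ι} {S : Finset ι} {c : E}
    (hN : ∀ k ∈ S, ∀ i ∈ N k, ∀ j ∉ N k, ‖x i - x k‖ ≤ ‖x j - x k‖)
    (hNcard : ∀ k ∈ S, #(N k) = Fintype.card ι - fhat)
    (hy : ∀ k ∈ S, y k = ((Fintype.card ι : ℝ) - fhat)⁻¹ • ∑ i ∈ N k, x i)
    (hS : #S = Fintype.card ι - f) (hc : ∑ i ∈ S, (x i - c) = 0) :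
    17 * #S * ∑ k ∈ S, ‖y k - c‖ ^ 2 ≤ 245 * fhat * ∑ i ∈ S, ‖x i - c‖ ^ 2 := by
  set n := Fintype.card ι
  have hm : 0 < (n : ℝ) - fhat := by
    rw [sub_pos]
    exact_mod_cast (by omega : fhat < n)
  have hNcast : ∀ k ∈ S, (#(N k) : ℝ) = n - fhat := fun k hk => by
    rw [hNcard k hk, Nat.cast_sub (by omega)]
  have hScast : (#S : ℝ) = n - f := by rw [hS, Nat.cast_sub (by omega)]
  have hyc : ∀ k ∈ S, ((n : ℝ) - fhat) • (y k - c) = ∑ i ∈ N k, (x i - c) := fun k hk => by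
    rw [hy k hk, smul_sub, smul_inv_smul₀ hm.ne', sum_sub_distrib, sum_const,
      ← Nat.cast_smul_eq_nsmul ℝ, hNcast k hk]
  have hu : ∀ k ∈ S, (#(S \ N k) : ℝ) ≤ fhat := fun k hk => by
    have : #(S \ N k) ≤ #(N k)ᶜ := card_le_card fun i hi => mem_compl.2 (mem_sdiff.1 hi).2
    rw [card_compl, hNcard k hk] at this
    exact_mod_cast this.trans (by omega)
  have huv : ∀ k ∈ S, (#(S \ N k) : ℝ) - #(N k \ S) = fhat - f := fun k hk => by
    rw [cast_card_sdiff_sub_cast_card_sdiff, hScast, hNcast k hk]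
    ring
  have hsum : ∑ k ∈ S, ‖∑ i ∈ N k, (x i - c)‖ ^ 2
      = ((n : ℝ) - fhat) ^ 2 * ∑ k ∈ S, ‖y k - c‖ ^ 2 := by
    rw [mul_sum]
    refine sum_congr rfl fun k hk => ?_
    rw [← hyc k hk, norm_smul, mul_pow, Real.norm_eq_abs, sq_abs]
  have hFH : (f : ℝ) ≤ fhat := by exact_mod_cast hf
  have hA := sum_sq_norm_sum_sub_le_of_center hc hN hFH hu huv
  have hB := sum_sq_norm_sum_sub_le_of_self hc hN hFH hu huv
  rw [hsum, hScast] at hA hB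
  rw [hScast]
  exact nnm_mul_le_of_bounds (Nat.cast_nonneg f) hFH (by exact_mod_cast hfn.le)
    (sum_nonneg fun _ _ => sq_nonneg _) hA hB

end InnerProduct

end Mixing

end

theorem stmt_3_general (n d f fhat : ℕ)
    (hf : f ≤ fhat) (hfn : 2 * fhat < n)
    (x : Fin n → EuclideanSpace ℝ (Fin d))
    (N : Fin n → Finset (Fin n)) (hN : ∀ k, IsNN n d fhat x k (N k))
    (y : Fin n → EuclideanSpace ℝ (Fin d))
    (hy : ∀ k, y k = ((n : ℝ) - fhat)⁻¹ • ∑ i ∈ N k, x i)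
    (M : Fin n → Finset (Fin n)) (hM : ∀ k, IsNN n d fhat y k (M k))
    (kstar : Fin n)
    (hks : ∀ k, ∑ i ∈ M kstar, ‖y i - y kstar‖ ^ 2 ≤ ∑ i ∈ M k, ‖y i - y k‖ ^ 2)
    (S : Finset (Fin n)) (hS : S.card = n - f) :
    ‖y kstar - (S.card : ℝ)⁻¹ • ∑ i ∈ S, x i‖ ^ 2
      ≤ (84 * (fhat : ℝ) / ((n : ℝ) - f - fhat)) *
          ((S.card : ℝ)⁻¹ * ∑ i ∈ S, ‖x i - (S.card : ℝ)⁻¹ • ∑ j ∈ S, x j‖ ^ 2) := by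
  set c := (#S : ℝ)⁻¹ • ∑ i ∈ S, x i
  have hc : ∑ i ∈ S, (x i - c) = 0 := sum_sub_inv_card_smul_sum_eq_zero S x
  have hmix := card_mul_sum_sq_norm_nnm_sub_le (ι := Fin n) hf (by simpa using hfn)
    (fun k _ => (hN k).2) (fun k _ => by simpa using (hN k).1) (fun k _ => by simpa using hy k)
    (by simpa using hS) hc
  have hkrum := card_inter_mul_sq_norm_sub_le_of_krum (fun k => (hM k).2)
    (fun k _ => by rw [(hM k).1, hS]; omega) (fun k _ => hks k) c
  have hinter : (n : ℝ) - f - fhat ≤ #(M kstar ∩ S) := by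
    have hunion := card_union_add_card_inter (M kstar) S
    have huniv : #(M kstar ∪ S) ≤ n := (card_le_univ _).trans_eq (Fintype.card_fin n)
    rw [(hM kstar).1, hS] at hunion
    have : (n : ℝ) ≤ #(M kstar ∩ S) + f + fhat := by exact_mod_cast (by omega)
    linarith
  have hh : (0 : ℝ) < n - f - fhat := by
    have : (f : ℝ) + fhat < n := by exact_mod_cast (by omega : f + fhat < n)
    linarith
  have hs : (0 : ℝ) < #S := by exact_mod_cast (by omega : 0 < #S)
  have hY := (mul_le_mul_of_nonneg_right hinter (sq_nonneg ‖y kstar - c‖)).trans hkrum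
  have key : #S * ((n - f - fhat) * ‖y kstar - c‖ ^ 2) ≤ 84 * fhat * ∑ i ∈ S, ‖x i - c‖ ^ 2 := by
    linarith [mul_le_mul_of_nonneg_left hY hs.le]
  calc ‖y kstar - c‖ ^ 2
      = #S * ((n - f - fhat) * ‖y kstar - c‖ ^ 2) / ((n - f - fhat) * #S) := by field_simp
    _ ≤ (84 * fhat * ∑ i ∈ S, ‖x i - c‖ ^ 2) / ((n - f - fhat) * #S) := by gcongr
    _ = _ := by field_simp

/-- The composite aggregator `(f̂-Krum) ∘ (f̂-NNM)` is `(f,κ)`-robust with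
`κ = 84 f̂ / (n - f - f̂)` whenever `0 ≤ f ≤ f̂ < n/2`. -/
theorem stmt_3 (n d f fhat : ℕ) (hn : 1 ≤ n) (hd : 1 ≤ d)
    (hf : f ≤ fhat) (hfn : 2 * fhat < n)
    (x : Fin n → EuclideanSpace ℝ (Fin d))
    (N : Fin n → Finset (Fin n)) (hN : ∀ k, IsNN n d fhat x k (N k))
    (y : Fin n → EuclideanSpace ℝ (Fin d))
    (hy : ∀ k, y k = ((n : ℝ) - fhat)⁻¹ • ∑ i ∈ N k, x i)
    (M : Fin n → Finset (Fin n)) (hM : ∀ k, IsNN n d fhat y k (M k))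
    (kstar : Fin n)
    (hks : ∀ k, ∑ i ∈ M kstar, ‖y i - y kstar‖ ^ 2 ≤ ∑ i ∈ M k, ‖y i - y k‖ ^ 2)
    (S : Finset (Fin n)) (hS : S.card = n - f) :
    ‖y kstar - (S.card : ℝ)⁻¹ • ∑ i ∈ S, x i‖ ^ 2
      ≤ (84 * (fhat : ℝ) / ((n : ℝ) - f - fhat)) *
          ((S.card : ℝ)⁻¹ * ∑ i ∈ S, ‖x i - (S.card : ℝ)⁻¹ • ∑ j ∈ S, x j‖ ^ 2) :=
  stmt_3_general n d f fhat hf hfn x N hN y hy M hM kstar hks S hS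
end

section
/- Let n, d ≥ 1, let f, f̂ be integers with 0 ≤ f ≤ f̂ < n/2, and let x₁,…,x_n ∈ ℝ^d. For each k ∈ {1,…,n} let N_k be a set of (n−f̂) nearest neighbors of x_k, and let k* ∈ {1,…,n} satisfy ∑_{i∈N_{k*}}‖x_i − x_{k*}‖² = min_{k∈{1,…,n}} ∑_{i∈N_k}‖x_i − x_k‖² (the f̂-Krum selection). Then for every S ⊆ {1,…,n} with |S| = n − f, ‖x_{k*} − x̄_S‖² ≤ (6(n−f)/(n−f−f̂))·(1/|S|)∑_{i∈S}‖x_i − x̄_S‖²; that is, f̂-Krum is (f,κ)-robust with κ = 6(n−f)/(n−f−f̂). -/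
/-!
Let `c` be the centroid of `S` and `V = ∑_{i ∈ S} ‖x i - c‖²`. Some `k₀ ∈ S` has
`|S| ‖x k₀ - c‖² ≤ V`. Nearest neighbours minimise `∑_{i ∈ T} ‖x i - x k₀‖²` over all sets `T` of
`n - f̂` points, so the score of `k₀`, and hence that of `kstar`, is at most
`∑_{i ∈ S} ‖x i - x k₀‖² = V + |S| ‖x k₀ - c‖² ≤ 2V`. At least `n - f - f̂` neighbours `x i` of
`x kstar` lie in `S`, and for each of them `‖x kstar - c‖² ≤ 2 ‖x i - x kstar‖² + 2 ‖x i - c‖²`;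
summing gives `(n - f - f̂) ‖x kstar - c‖² ≤ 2 · 2V + 2V = 6V`.
-/

open Finset

namespace Finset

variable {ι : Type*}

theorem sum_le_sum_of_card_eq_of_forall_le {M : Type*} [AddCommMonoid M] [LinearOrder M]
    [IsOrderedAddMonoid M] [DecidableEq ι] {g : ι → M} {N T : Finset ι} (hcard : #T = #N)
    (hle : ∀ i ∈ N, ∀ j ∉ N, g i ≤ g j) :
    ∑ i ∈ N, g i ≤ ∑ i ∈ T, g i := by
  have hsdiff : #(N \ T) = #(T \ N) := card_sdiff_comm hcard.symm
  rw [← sum_inter_add_sum_sdiff N T, ← sum_inter_add_sum_sdiff T N, inter_comm]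
  refine add_le_add le_rfl ?_
  rcases (T \ N).eq_empty_or_nonempty with hTN | hTN
  · rw [hTN, card_empty, card_eq_zero] at hsdiff
    simp [hsdiff, hTN]
  obtain ⟨j₀, hj₀, hj₀_min⟩ := exists_min_image (T \ N) g hTN
  calc ∑ i ∈ N \ T, g i ≤ #(N \ T) • g j₀ :=
        sum_le_card_nsmul _ _ _ fun i hi ↦ hle i (mem_sdiff.1 hi).1 j₀ (mem_sdiff.1 hj₀).2
    _ = #(T \ N) • g j₀ := by rw [hsdiff]
    _ ≤ ∑ j ∈ T \ N, g j := card_nsmul_le_sum _ _ _ hj₀_min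

variable {E : Type*}

theorem card_mul_norm_sub_sq_le [SeminormedAddCommGroup E] (M : Finset ι) (x : ι → E)
    (y c : E) :
    #M * ‖y - c‖ ^ 2 ≤ 2 * ∑ i ∈ M, ‖x i - y‖ ^ 2 + 2 * ∑ i ∈ M, ‖x i - c‖ ^ 2 := by
  have hpoint (i : ι) : ‖y - c‖ ^ 2 ≤ 2 * ‖x i - y‖ ^ 2 + 2 * ‖x i - c‖ ^ 2 := by
    have htri : ‖y - c‖ ≤ ‖x i - y‖ + ‖x i - c‖ := by
      simpa only [dist_eq_norm] using dist_triangle_left y c (x i)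
    nlinarith [add_sq_le (a := ‖x i - y‖) (b := ‖x i - c‖), norm_nonneg (y - c)]
  calc #M * ‖y - c‖ ^ 2 = ∑ _i ∈ M, ‖y - c‖ ^ 2 := by rw [sum_const, nsmul_eq_mul]
    _ ≤ ∑ i ∈ M, (2 * ‖x i - y‖ ^ 2 + 2 * ‖x i - c‖ ^ 2) := sum_le_sum fun i _ ↦ hpoint i
    _ = _ := by rw [sum_add_distrib, mul_sum, mul_sum]

variable [NormedAddCommGroup E] [InnerProductSpace ℝ E]

theorem sum_norm_sub_sq_eq_add_card_mul (S : Finset ι) (x : ι → E) (y : E) :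
    ∑ i ∈ S, ‖x i - y‖ ^ 2
      = ∑ i ∈ S, ‖x i - (#S : ℝ)⁻¹ • ∑ j ∈ S, x j‖ ^ 2
        + #S * ‖y - (#S : ℝ)⁻¹ • ∑ j ∈ S, x j‖ ^ 2 := by
  set c : E := (#S : ℝ)⁻¹ • ∑ j ∈ S, x j
  have hcentered : ∑ i ∈ S, (x i - c) = 0 := by
    rcases S.eq_empty_or_nonempty with rfl | hS
    · exact sum_empty
    rw [sum_sub_distrib, sum_const, ← Nat.cast_smul_eq_nsmul ℝ, smul_inv_smul₀ (by positivity),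
      sub_self]
  have hcross : ∑ i ∈ S, 2 * inner ℝ (x i - c) (c - y) = 0 := by
    rw [← mul_sum, ← sum_inner, hcentered, inner_zero_left, mul_zero]
  calc ∑ i ∈ S, ‖x i - y‖ ^ 2
      = ∑ i ∈ S, (‖x i - c‖ ^ 2 + 2 * inner ℝ (x i - c) (c - y) + ‖c - y‖ ^ 2) := by
        refine sum_congr rfl fun i _ ↦ ?_
        rw [← norm_add_sq_real, sub_add_sub_cancel]
    _ = _ := by
        rw [sum_add_distrib, sum_add_distrib, hcross, sum_const, nsmul_eq_mul, norm_sub_rev c y,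
          add_zero]

end Finset

section Krum

variable {n d fhat : ℕ} {x : Fin n → EuclideanSpace ℝ (Fin d)}

theorem IsNN.sum_norm_sub_sq_le {k : Fin n} {N S : Finset (Fin n)} (hN : IsNN n d fhat x k N)
    (hS : n - fhat ≤ #S) :
    ∑ i ∈ N, ‖x i - x k‖ ^ 2 ≤ ∑ i ∈ S, ‖x i - x k‖ ^ 2 := by
  obtain ⟨T, hTS, hT⟩ := exists_subset_card_eq hS
  calc ∑ i ∈ N, ‖x i - x k‖ ^ 2 ≤ ∑ i ∈ T, ‖x i - x k‖ ^ 2 :=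
        sum_le_sum_of_card_eq_of_forall_le (hT.trans hN.1.symm) fun i hi j hj ↦
          pow_le_pow_left₀ (norm_nonneg _) (hN.2 i hi j hj) 2
    _ ≤ ∑ i ∈ S, ‖x i - x k‖ ^ 2 := sum_le_sum_of_subset_of_nonneg hTS fun _ _ _ ↦ sq_nonneg _

theorem IsNN.card_le_card_inter_add {k : Fin n} {N : Finset (Fin n)} (hN : IsNN n d fhat x k N)
    (S : Finset (Fin n)) : #S ≤ #(N ∩ S) + fhat := by
  have := card_union_add_card_inter N S
  have := card_le_univ (N ∪ S)
  rw [Fintype.card_fin, hN.1] at *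
  omega

variable {N : Fin n → Finset (Fin n)} {kstar : Fin n} {S : Finset (Fin n)}

theorem krum_score_le_two_mul (hN : ∀ k, IsNN n d fhat x k (N k))
    (hks : ∀ k, ∑ i ∈ N kstar, ‖x i - x kstar‖ ^ 2 ≤ ∑ i ∈ N k, ‖x i - x k‖ ^ 2)
    (hSne : S.Nonempty) (hS : n - fhat ≤ #S) :
    ∑ i ∈ N kstar, ‖x i - x kstar‖ ^ 2
      ≤ 2 * ∑ i ∈ S, ‖x i - (#S : ℝ)⁻¹ • ∑ j ∈ S, x j‖ ^ 2 := by
  set c := (#S : ℝ)⁻¹ • ∑ j ∈ S, x j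
  set V := ∑ i ∈ S, ‖x i - c‖ ^ 2
  obtain ⟨k₀, hk₀S, hk₀⟩ : ∃ k₀ ∈ S, #S * ‖x k₀ - c‖ ^ 2 ≤ V := by
    refine exists_le_of_sum_le hSne (le_of_eq ?_)
    rw [← mul_sum, sum_const, nsmul_eq_mul]
  calc ∑ i ∈ N kstar, ‖x i - x kstar‖ ^ 2 ≤ ∑ i ∈ N k₀, ‖x i - x k₀‖ ^ 2 := hks k₀
    _ ≤ ∑ i ∈ S, ‖x i - x k₀‖ ^ 2 := (hN k₀).sum_norm_sub_sq_le hS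
    _ = V + #S * ‖x k₀ - c‖ ^ 2 := sum_norm_sub_sq_eq_add_card_mul S x (x k₀)
    _ ≤ 2 * V := by linarith

theorem krum_mul_norm_sub_centroid_sq_le (hN : ∀ k, IsNN n d fhat x k (N k))
    (hks : ∀ k, ∑ i ∈ N kstar, ‖x i - x kstar‖ ^ 2 ≤ ∑ i ∈ N k, ‖x i - x k‖ ^ 2)
    (hSne : S.Nonempty) (hS : n - fhat ≤ #S) :
    ((#S : ℝ) - fhat) * ‖x kstar - (#S : ℝ)⁻¹ • ∑ j ∈ S, x j‖ ^ 2
      ≤ 6 * ∑ i ∈ S, ‖x i - (#S : ℝ)⁻¹ • ∑ j ∈ S, x j‖ ^ 2 := by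
  have hscore := krum_score_le_two_mul hN hks hSne hS
  have hinter : (#S : ℝ) ≤ #(N kstar ∩ S) + fhat := by
    exact_mod_cast (hN kstar).card_le_card_inter_add S
  set c := (#S : ℝ)⁻¹ • ∑ j ∈ S, x j
  set V := ∑ i ∈ S, ‖x i - c‖ ^ 2
  calc ((#S : ℝ) - fhat) * ‖x kstar - c‖ ^ 2 ≤ #(N kstar ∩ S) * ‖x kstar - c‖ ^ 2 := by
        gcongr; linarith
    _ ≤ 2 * ∑ i ∈ N kstar ∩ S, ‖x i - x kstar‖ ^ 2 + 2 * ∑ i ∈ N kstar ∩ S, ‖x i - c‖ ^ 2 :=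
        card_mul_norm_sub_sq_le _ x _ _
    _ ≤ 2 * ∑ i ∈ N kstar, ‖x i - x kstar‖ ^ 2 + 2 * V := by
        gcongr
        · exact inter_subset_left
        · exact sum_le_sum_of_subset_of_nonneg inter_subset_right fun _ _ _ ↦ sq_nonneg _
    _ ≤ 6 * V := by linarith

end Krum

theorem stmt_5_general (n d f fhat : ℕ)
    (hf : f ≤ fhat) (hfn : 2 * fhat < n)
    (x : Fin n → EuclideanSpace ℝ (Fin d))
    (N : Fin n → Finset (Fin n)) (hN : ∀ k, IsNN n d fhat x k (N k))
    (kstar : Fin n)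
    (hks : ∀ k, ∑ i ∈ N kstar, ‖x i - x kstar‖ ^ 2 ≤ ∑ i ∈ N k, ‖x i - x k‖ ^ 2)
    (S : Finset (Fin n)) (hS : S.card = n - f) :
    ‖x kstar - (S.card : ℝ)⁻¹ • ∑ i ∈ S, x i‖ ^ 2
      ≤ (6 * ((n : ℝ) - f) / ((n : ℝ) - f - fhat)) *
          ((S.card : ℝ)⁻¹ * ∑ i ∈ S, ‖x i - (S.card : ℝ)⁻¹ • ∑ j ∈ S, x j‖ ^ 2) := by
  have hSne : S.Nonempty := card_pos.1 (by omega)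
  have hkey := krum_mul_norm_sub_centroid_sq_le hN hks hSne (by omega)
  have hpos : (0 : ℝ) < #S - fhat := by
    rw [sub_pos]; exact_mod_cast (by omega : fhat < #S)
  rw [← show (#S : ℝ) = n - f by rw [hS, Nat.cast_sub (by omega)]]
  calc _ ≤ 6 * (∑ i ∈ S, ‖x i - (#S : ℝ)⁻¹ • ∑ j ∈ S, x j‖ ^ 2) / (#S - fhat) := by
        rw [le_div_iff₀ hpos]; linarith
    _ = _ := by field_simp [hpos.ne', hSne.card_pos.ne']

/-- `f̂`-Krum is `(f,κ)`-robust with `κ = 6(n-f)/(n-f-f̂)` for `0 ≤ f ≤ f̂ < n/2`. -/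
theorem stmt_5 (n d f fhat : ℕ) (hn : 1 ≤ n) (hd : 1 ≤ d)
    (hf : f ≤ fhat) (hfn : 2 * fhat < n)
    (x : Fin n → EuclideanSpace ℝ (Fin d))
    (N : Fin n → Finset (Fin n)) (hN : ∀ k, IsNN n d fhat x k (N k))
    (kstar : Fin n)
    (hks : ∀ k, ∑ i ∈ N kstar, ‖x i - x kstar‖ ^ 2 ≤ ∑ i ∈ N k, ‖x i - x k‖ ^ 2)
    (S : Finset (Fin n)) (hS : S.card = n - f) :
    ‖x kstar - (S.card : ℝ)⁻¹ • ∑ i ∈ S, x i‖ ^ 2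
      ≤ (6 * ((n : ℝ) - f) / ((n : ℝ) - f - fhat)) *
          ((S.card : ℝ)⁻¹ * ∑ i ∈ S, ‖x i - (S.card : ℝ)⁻¹ • ∑ j ∈ S, x j‖ ^ 2) :=
  stmt_5_general n d f fhat hf hfn x N hN kstar hks S hS
end

section
/- Let n, d ≥ 1, let f, f̂ be integers with 0 ≤ f ≤ f̂ < n/2, and let x₁,…,x_n ∈ ℝ^d. Fix k ∈ {1,…,n}, let N_k be a set of (n−f̂) nearest neighbors of x_k, and set y_k = (1/(n−f̂))∑_{i∈N_k} x_i. Then for every S ⊆ {1,…,n} with |S| = n − f, writing x̄_S = (1/|S|)∑_{i∈S} x_i, it holds that ‖y_k − x̄_S‖² ≤ (6f̂/((n−f)²))·∑_{i∈S}‖x_i − x_k‖². -/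
/-!
Centre everything at `x k`, put `u i = x i - x k`, and split `Nk` and `S` into `A = Nk \ S`,
`B = S \ Nk` and `C = S ∩ Nk`. Then
`|Nk| |S| (y - x̄_S) = |S| ∑_A u - |Nk| ∑_B u + (|S| - |Nk|) ∑_C u`.
Every `u i` with `i ∈ A` is no longer than every `u j` with `j ∈ B`, and `|S| |A| ≤ |Nk| |B|`,
so the first term is controlled by `∑_B ‖u‖²` just like the second one is by Cauchy–Schwarz;
the third is Cauchy–Schwarz as well. Since `S ∪ Nk` has at most `n` elements, `|B| ≤ f̂`, and
combining the three squared bounds gives the estimate with the constant `5 |B| ≤ 6 f̂`.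
-/

open Finset

section
variable {ι : Type*}

theorem card_nsmul_sum_le_card_nsmul_sum_of_forall_le {M : Type*} [AddCommMonoid M]
    [PartialOrder M] [IsOrderedAddMonoid M] {s t : Finset ι} {w : ι → M}
    (h : ∀ i ∈ s, ∀ j ∈ t, w i ≤ w j) :
    #t • ∑ i ∈ s, w i ≤ #s • ∑ j ∈ t, w j := by
  rw [← sum_const, ← sum_const, sum_comm]
  exact sum_le_sum fun i hi => sum_le_sum fun j hj => h i hi j hj

theorem card_mul_card_sdiff_le_card_mul_card_sdiff [DecidableEq ι] {s t : Finset ι}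
    (h : #t ≤ #s) : #s * #(t \ s) ≤ #t * #(s \ t) := by
  have hs := card_inter_add_card_sdiff s t
  have ht := card_inter_add_card_sdiff t s
  rw [inter_comm] at ht
  have hab : #(t \ s) ≤ #(s \ t) := by omega
  rw [← hs, ← ht, add_mul, add_mul, mul_comm #(s \ t)]
  gcongr

theorem sq_norm_sum_le_card_mul_sum_sq {E : Type*} [SeminormedAddCommGroup E] (s : Finset ι)
    (u : ι → E) :
    ‖∑ i ∈ s, u i‖ ^ 2 ≤ #s * ∑ i ∈ s, ‖u i‖ ^ 2 :=
  (pow_le_pow_left₀ (norm_nonneg _) (norm_sum_le _ _) 2).trans sq_sum_le_card_mul_sum_sq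

theorem sq_add_add_le_five_mul {x y z κ β γ : ℝ} (hx : x ^ 2 ≤ κ * β) (hy : y ^ 2 ≤ κ * β)
    (hz : z ^ 2 ≤ κ * γ) : (x + y + z) ^ 2 ≤ 5 * κ * (β + γ) := by
  nlinarith [sq_nonneg (x - y), sq_nonneg (x - 2 * z), sq_nonneg (y - 2 * z)]

theorem card_mul_card_smul_mean_sub_mean_eq [DecidableEq ι] {E : Type*} [AddCommGroup E]
    [Module ℝ E] {s t : Finset ι} (hs : s.Nonempty) (ht : t.Nonempty) (x : ι → E) (z : E) :
    ((#t : ℝ) * #s) • ((#t : ℝ)⁻¹ • ∑ i ∈ t, x i - (#s : ℝ)⁻¹ • ∑ i ∈ s, x i)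
      = (#s : ℝ) • ∑ i ∈ t \ s, (x i - z) - (#t : ℝ) • ∑ i ∈ s \ t, (x i - z)
        + ((#s : ℝ) - #t) • ∑ i ∈ s ∩ t, (x i - z) := by
  have hsum (r : Finset ι) : ∑ i ∈ r, x i = ∑ i ∈ r, (x i - z) + (#r : ℝ) • z := by
    rw [sum_sub_distrib, sum_const, Nat.cast_smul_eq_nsmul, sub_add_cancel]
  have hs0 : (#s : ℝ) ≠ 0 := by exact_mod_cast hs.card_pos.ne'
  have ht0 : (#t : ℝ) ≠ 0 := by exact_mod_cast ht.card_pos.ne'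
  rw [hsum s, hsum t, ← sum_inter_add_sum_sdiff s t, ← sum_inter_add_sum_sdiff t s,
    inter_comm t s]
  match_scalars <;> field_simp
  ring

theorem sq_card_mul_norm_sum_sdiff_le {E : Type*} [SeminormedAddCommGroup E] [DecidableEq ι]
    {s t : Finset ι} (u : ι → E) (hts : #t ≤ #s)
    (hnn : ∀ i ∈ t \ s, ∀ j ∈ s \ t, ‖u i‖ ≤ ‖u j‖) :
    ((#s : ℝ) * ‖∑ i ∈ t \ s, u i‖) ^ 2 ≤ (#t : ℝ) ^ 2 * #(s \ t) * ∑ i ∈ s \ t, ‖u i‖ ^ 2 := by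
  have hcs := sq_norm_sum_le_card_mul_sum_sq (t \ s) u
  have hexch : (#(s \ t) : ℝ) * ∑ i ∈ t \ s, ‖u i‖ ^ 2 ≤ #(t \ s) * ∑ i ∈ s \ t, ‖u i‖ ^ 2 := by
    simpa only [nsmul_eq_mul] using card_nsmul_sum_le_card_nsmul_sum_of_forall_le
      fun i hi j hj => pow_le_pow_left₀ (norm_nonneg _) (hnn i hi j hj) 2
  have hcard : (#s : ℝ) * #(t \ s) ≤ #t * #(s \ t) := by
    exact_mod_cast card_mul_card_sdiff_le_card_mul_card_sdiff hts
  rcases (#(s \ t)).eq_zero_or_pos with hb | hb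
  · have hab : (#s : ℝ) * #(t \ s) = 0 := by
      have : (#s : ℝ) * #(t \ s) ≤ 0 := by simpa [hb] using hcard
      exact this.antisymm (by positivity)
    rw [hb, Nat.cast_zero, mul_zero, zero_mul]
    calc ((#s : ℝ) * ‖∑ i ∈ t \ s, u i‖) ^ 2
        ≤ #s ^ 2 * (#(t \ s) * ∑ i ∈ t \ s, ‖u i‖ ^ 2) := by rw [mul_pow]; gcongr
      _ = #s * (#s * #(t \ s)) * ∑ i ∈ t \ s, ‖u i‖ ^ 2 := by ring
      _ = 0 := by rw [hab, mul_zero, zero_mul]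
  · have hb' : (0 : ℝ) < #(s \ t) := by exact_mod_cast hb
    refine le_of_mul_le_mul_left ?_ hb'
    calc (#(s \ t) : ℝ) * ((#s : ℝ) * ‖∑ i ∈ t \ s, u i‖) ^ 2
        ≤ #(s \ t) * (#s ^ 2 * (#(t \ s) * ∑ i ∈ t \ s, ‖u i‖ ^ 2)) := by
          rw [mul_pow]; gcongr
      _ = #s ^ 2 * #(t \ s) * (#(s \ t) * ∑ i ∈ t \ s, ‖u i‖ ^ 2) := by ring
      _ ≤ #s ^ 2 * #(t \ s) * (#(t \ s) * ∑ i ∈ s \ t, ‖u i‖ ^ 2) := by gcongr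
      _ = (#s * #(t \ s)) ^ 2 * ∑ i ∈ s \ t, ‖u i‖ ^ 2 := by ring
      _ ≤ (#t * #(s \ t)) ^ 2 * ∑ i ∈ s \ t, ‖u i‖ ^ 2 := by gcongr
      _ = #(s \ t) * (#t ^ 2 * #(s \ t) * ∑ i ∈ s \ t, ‖u i‖ ^ 2) := by ring

variable {E : Type*} [NormedAddCommGroup E] [NormedSpace ℝ E]

theorem card_mul_card_mul_norm_mean_sub_mean_le [DecidableEq ι] {s t : Finset ι}
    (hts : #t ≤ #s) (ht : t.Nonempty) (x : ι → E) (z : E) :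
    (#t : ℝ) * #s * ‖(#t : ℝ)⁻¹ • ∑ i ∈ t, x i - (#s : ℝ)⁻¹ • ∑ i ∈ s, x i‖
      ≤ #s * ‖∑ i ∈ t \ s, (x i - z)‖ + #t * ‖∑ i ∈ s \ t, (x i - z)‖
        + ((#s : ℝ) - #t) * ‖∑ i ∈ s ∩ t, (x i - z)‖ := by
  have hs : s.Nonempty := card_pos.mp (ht.card_pos.trans_le hts)
  have hgap : (0 : ℝ) ≤ #s - #t := sub_nonneg.mpr (by exact_mod_cast hts)
  rw [← norm_smul_of_nonneg (by positivity), card_mul_card_smul_mean_sub_mean_eq hs ht x z]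
  refine (norm_add_le _ _).trans (add_le_add ((norm_sub_le _ _).trans_eq ?_) ?_)
  · rw [norm_smul_of_nonneg (by positivity), norm_smul_of_nonneg (by positivity)]
  · rw [norm_smul_of_nonneg hgap]

theorem sq_norm_mean_sub_mean_le [DecidableEq ι] {s t : Finset ι} (x : ι → E) (z : E)
    (hts : #t ≤ #s) (hst : #(s \ t) ≤ #t) (ht : t.Nonempty)
    (hnn : ∀ i ∈ t \ s, ∀ j ∈ s \ t, ‖x i - z‖ ≤ ‖x j - z‖) :
    ‖(#t : ℝ)⁻¹ • ∑ i ∈ t, x i - (#s : ℝ)⁻¹ • ∑ i ∈ s, x i‖ ^ 2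
      ≤ 5 * #(s \ t) / #s ^ 2 * ∑ i ∈ s, ‖x i - z‖ ^ 2 := by
  set v := (#t : ℝ)⁻¹ • ∑ i ∈ t, x i - (#s : ℝ)⁻¹ • ∑ i ∈ s, x i
  set κ : ℝ := #t ^ 2 * #(s \ t)
  have hs : (0 : ℝ) < #s := by exact_mod_cast ht.card_pos.trans_le hts
  have hP := sq_card_mul_norm_sum_sdiff_le (fun i => x i - z) hts hnn
  have hQ : ((#t : ℝ) * ‖∑ i ∈ s \ t, (x i - z)‖) ^ 2 ≤ κ * ∑ i ∈ s \ t, ‖x i - z‖ ^ 2 := by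
    rw [mul_pow, mul_assoc]
    gcongr
    exact sq_norm_sum_le_card_mul_sum_sq _ _
  have hR : (((#s : ℝ) - #t) * ‖∑ i ∈ s ∩ t, (x i - z)‖) ^ 2
      ≤ κ * ∑ i ∈ s ∩ t, ‖x i - z‖ ^ 2 := by
    have hs' : (#s : ℝ) = #(s ∩ t) + #(s \ t) := by
      exact_mod_cast (card_inter_add_card_sdiff s t).symm
    have ht' : (#t : ℝ) = #(s ∩ t) + #(t \ s) := by
      rw [inter_comm]; exact_mod_cast (card_inter_add_card_sdiff t s).symm
    have hc : (#(s ∩ t) : ℝ) ≤ #t := by exact_mod_cast card_le_card inter_subset_right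
    have hb : (#(s \ t) : ℝ) ≤ #t := by exact_mod_cast hst
    have hts' : (#t : ℝ) ≤ #s := by exact_mod_cast hts
    have hcoef : ((#s : ℝ) - #t) ^ 2 * #(s ∩ t) ≤ κ := by
      have hg : 0 ≤ (#s : ℝ) - #t := by linarith
      calc ((#s : ℝ) - #t) ^ 2 * #(s ∩ t) = (#s - #t) * ((#s - #t) * #(s ∩ t)) := by ring
        _ ≤ #(s \ t) * (#t * #t) := by gcongr <;> linarith
        _ = κ := by ring
    calc (((#s : ℝ) - #t) * ‖∑ i ∈ s ∩ t, (x i - z)‖) ^ 2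
        ≤ ((#s : ℝ) - #t) ^ 2 * (#(s ∩ t) * ∑ i ∈ s ∩ t, ‖x i - z‖ ^ 2) := by
          rw [mul_pow]; gcongr; exact sq_norm_sum_le_card_mul_sum_sq _ _
      _ ≤ κ * ∑ i ∈ s ∩ t, ‖x i - z‖ ^ 2 := by rw [← mul_assoc]; gcongr
  have hsplit := sum_inter_add_sum_sdiff s t fun i => ‖x i - z‖ ^ 2
  have hbound : ((#t : ℝ) * #s * ‖v‖) ^ 2 ≤ 5 * κ * ∑ i ∈ s, ‖x i - z‖ ^ 2 := by
    rw [← hsplit, add_comm (∑ i ∈ s ∩ t, _)]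
    refine (pow_le_pow_left₀ (by positivity) ?_ 2).trans (sq_add_add_le_five_mul hP hQ hR)
    exact card_mul_card_mul_norm_mean_sub_mean_le hts ht x z
  have ht2 : (0 : ℝ) < #t ^ 2 := by have := ht.card_pos; positivity
  rw [div_mul_eq_mul_div, le_div_iff₀ (by positivity)]
  refine le_of_mul_le_mul_left ?_ ht2
  linear_combination hbound

end

theorem stmt_8_general (n d f fhat : ℕ)
    (hf : f ≤ fhat) (hfn : 2 * fhat < n)
    (x : Fin n → EuclideanSpace ℝ (Fin d)) (k : Fin n)
    (Nk : Finset (Fin n)) (hNk : IsNN n d fhat x k Nk)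
    (y : EuclideanSpace ℝ (Fin d)) (hy : y = ((n : ℝ) - fhat)⁻¹ • ∑ i ∈ Nk, x i)
    (S : Finset (Fin n)) (hS : S.card = n - f) :
    ‖y - (S.card : ℝ)⁻¹ • ∑ i ∈ S, x i‖ ^ 2
      ≤ (6 * (fhat : ℝ) / ((n : ℝ) - f) ^ 2) * ∑ i ∈ S, ‖x i - x k‖ ^ 2 := by
  obtain ⟨hNcard, hNN⟩ := hNk
  have hout : #(S \ Nk) ≤ fhat := by
    have := (card_sdiff_add_card S Nk).trans_le (card_le_univ _)
    rw [Fintype.card_fin] at this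
    omega
  have hM : (n : ℝ) - fhat = #Nk := by rw [hNcard, Nat.cast_sub (by omega)]
  have hSa : (n : ℝ) - f = #S := by rw [hS, Nat.cast_sub (by omega)]
  rw [hy, hM, hSa]
  refine (sq_norm_mean_sub_mean_le x (x k) (by omega) (by omega) (card_pos.mp (by omega))
    fun i hi j hj => hNN i (mem_sdiff.mp hi).1 j (mem_sdiff.mp hj).2).trans ?_
  gcongr
  norm_num

/-- For `0 ≤ f ≤ f̂ < n/2`, the `f̂`-NNM mixed point `y_k = (1/(n-f̂)) ∑_{i∈N_k} x_i`
satisfies `‖y_k - x̄_S‖² ≤ (6f̂/(n-f)²) ∑_{i∈S} ‖x_i - x_k‖²` for every `S` with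
`|S| = n - f`. -/
theorem stmt_8 (n d f fhat : ℕ) (hn : 1 ≤ n) (hd : 1 ≤ d)
    (hf : f ≤ fhat) (hfn : 2 * fhat < n)
    (x : Fin n → EuclideanSpace ℝ (Fin d)) (k : Fin n)
    (Nk : Finset (Fin n)) (hNk : IsNN n d fhat x k Nk)
    (y : EuclideanSpace ℝ (Fin d)) (hy : y = ((n : ℝ) - fhat)⁻¹ • ∑ i ∈ Nk, x i)
    (S : Finset (Fin n)) (hS : S.card = n - f) :
    ‖y - (S.card : ℝ)⁻¹ • ∑ i ∈ S, x i‖ ^ 2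
      ≤ (6 * (fhat : ℝ) / ((n : ℝ) - f) ^ 2) * ∑ i ∈ S, ‖x i - x k‖ ^ 2 :=
  stmt_8_general n d f fhat hf hfn x k Nk hNk y hy S hS
end

section
/- Let n, f, f̂ be integers with 0 ≤ f̂ < f < n/2, let γ > 0 be real, let H ≥ 1 be an integer, and let w₀ ∈ ℝ be arbitrary. Define the real sequence (w_t) by w_{t+1} = [ (n−f−f̂)·(1−γ)^H·w_t + n·(f−f̂)·|(1−γ)^H·w_t| + (f−f̂)·t ] / (n − 2f̂) for all t ≥ 0. Then: (i) w_{t+1} ≥ t·(f−f̂)/(n−2f̂) for every t ≥ 0; (ii) (1/T)∑_{t=0}^{T−1} w_t² → +∞ as T → ∞; and (iii) w_T²/2 → +∞ as T → ∞. -/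
/-!
Since `n (f - f̂) ≥ n - f - f̂ ≥ 0`, the `|·|` term of the recursion dominates the linear one,
so the numerator is at least `(f - f̂) t`: the iterates grow linearly. Hence `w_T² → ∞`, and
so does its Cesàro mean.
-/

open Finset Filter Topology

theorem mul_add_mul_abs_nonneg {α : Type*} [Ring α] [LinearOrder α] [IsStrictOrderedRing α]
    {a b : α} (x : α) (ha : 0 ≤ a) (hab : a ≤ b) : 0 ≤ a * x + b * |x| := by
  have hx : 0 ≤ x + |x| := neg_le_iff_add_nonneg.1 (neg_abs_le x)
  calc 0 ≤ a * (x + |x|) := mul_nonneg ha hx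
    _ = a * x + a * |x| := mul_add a x |x|
    _ ≤ a * x + b * |x| := by gcongr

theorem Filter.Tendsto.cesaro_atTop {u : ℕ → ℝ} (h : Tendsto u atTop atTop) :
    Tendsto (fun n : ℕ => (n : ℝ)⁻¹ * ∑ i ∈ range n, u i) atTop atTop := by
  refine tendsto_atTop.2 fun b => ?_
  obtain ⟨N, hN⟩ := eventually_atTop.1 (h.eventually_ge_atTop (b + 1))
  set C := ∑ i ∈ range N, u i - N * (b + 1)
  -- the mean is at least `b + 1 + C / n`, and `C / n → 0`
  have hlim : Tendsto (fun n : ℕ => b + 1 + C * (n : ℝ)⁻¹) atTop (𝓝 (b + 1)) := by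
    simpa using (tendsto_inv_atTop_nhds_zero_nat.const_mul C).const_add (b + 1)
  filter_upwards [hlim.eventually (lt_mem_nhds (lt_add_one b)), eventually_ge_atTop (max N 1)]
    with n hlt hn
  have hNn : N ≤ n := le_of_max_le_left hn
  have hn0 : (0 : ℝ) < n := by exact_mod_cast le_of_max_le_right hn
  have htail : ((n - N : ℕ) : ℝ) * (b + 1) ≤ ∑ i ∈ Ico N n, u i := by
    simpa only [nsmul_eq_mul, Nat.card_Ico] using
      card_nsmul_le_sum (Ico N n) u (b + 1) fun i hi => hN i (mem_Ico.1 hi).1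
  have hsum : (n : ℝ) * (b + 1) + C ≤ ∑ i ∈ range n, u i := by
    rw [← sum_range_add_sum_Ico u hNn]
    push_cast [hNn] at htail
    linarith
  calc b ≤ b + 1 + C * (n : ℝ)⁻¹ := hlt.le
    _ = (n : ℝ)⁻¹ * ((n : ℝ) * (b + 1) + C) := by field_simp
    _ ≤ (n : ℝ)⁻¹ * ∑ i ∈ range n, u i := by gcongr

theorem stmt_11_general (n f fhat : ℕ) (hlt : fhat < f) (hn : 2 * f < n)
    (γ : ℝ) (H : ℕ) (w : ℕ → ℝ)
    (hrec : ∀ t : ℕ, w (t + 1) =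
      (((n : ℝ) - f - fhat) * ((1 - γ) ^ H * w t)
        + (n : ℝ) * ((f : ℝ) - fhat) * |(1 - γ) ^ H * w t|
        + ((f : ℝ) - fhat) * t) / ((n : ℝ) - 2 * fhat)) :
    (∀ t : ℕ, (t : ℝ) * ((f : ℝ) - fhat) / ((n : ℝ) - 2 * fhat) ≤ w (t + 1)) ∧
    Tendsto (fun T : ℕ => (T : ℝ)⁻¹ * ∑ t ∈ Finset.range T, (w t) ^ 2) atTop atTop ∧
    Tendsto (fun T : ℕ => (w T) ^ 2 / 2) atTop atTop := by
  have hgap : (1 : ℝ) ≤ f - fhat := by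
    rw [le_sub_iff_add_le']
    exact_mod_cast hlt
  have hnf : 2 * (f : ℝ) < n := by exact_mod_cast hn
  have hD : (0 : ℝ) < n - 2 * fhat := by linarith
  have hlow : ∀ t : ℕ, (t : ℝ) * ((f : ℝ) - fhat) / ((n : ℝ) - 2 * fhat) ≤ w (t + 1) := by
    intro t
    rw [hrec t]
    gcongr
    have := mul_add_mul_abs_nonneg ((1 - γ) ^ H * w t) (by linarith : (0 : ℝ) ≤ n - f - fhat)
      (by nlinarith : (n : ℝ) - f - fhat ≤ n * (f - fhat))
    linarith
  have hw : Tendsto w atTop atTop := by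
    refine (tendsto_add_atTop_iff_nat 1).1 (tendsto_atTop_mono hlow ?_)
    simp_rw [mul_div_assoc]
    exact tendsto_natCast_atTop_atTop.atTop_mul_const (div_pos (by linarith) hD)
  have hsq : Tendsto (fun T => w T ^ 2) atTop atTop := (tendsto_pow_atTop two_ne_zero).comp hw
  exact ⟨hlow, hsq.cesaro_atTop, hsq.atTop_div_const two_pos⟩

/-- Underestimation (`f̂ < f`) can make FedRo with the trimmed-mean aggregator diverge:
with honest losses `ℓ_k(w) = w²/2` and Byzantine uploads `n·|(1-γ)^H w_t| + t`, the
global iterate satisfies `w_{t+1} ≥ t(f-f̂)/(n-2f̂)`, and both the averaged squared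
gradient `(1/T) ∑_{t<T} w_t²` and the optimality gap `w_T²/2` diverge to `+∞`. -/
theorem stmt_11 (n f fhat : ℕ) (hlt : fhat < f) (hn : 2 * f < n)
    (γ : ℝ) (hγ : 0 < γ) (H : ℕ) (hH : 1 ≤ H) (w : ℕ → ℝ)
    (hrec : ∀ t : ℕ, w (t + 1) =
      (((n : ℝ) - f - fhat) * ((1 - γ) ^ H * w t)
        + (n : ℝ) * ((f : ℝ) - fhat) * |(1 - γ) ^ H * w t|
        + ((f : ℝ) - fhat) * t) / ((n : ℝ) - 2 * fhat)) :
    (∀ t : ℕ, (t : ℝ) * ((f : ℝ) - fhat) / ((n : ℝ) - 2 * fhat) ≤ w (t + 1)) ∧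
    Tendsto (fun T : ℕ => (T : ℝ)⁻¹ * ∑ t ∈ Finset.range T, (w t) ^ 2) atTop atTop ∧
    Tendsto (fun T : ℕ => (w T) ^ 2 / 2) atTop atTop :=
  stmt_11_general n f fhat hlt hn γ H w hrec
end

section
/- Let d ≥ 1, let ℓ : ℝ^d → ℝ be L-smooth for some L > 0, let γ > 0 be real and H ≥ 1 an integer with L²γ²H(H−1) ≤ 1/2, and let w ∈ ℝ^d. Define the gradient-descent sequence v₀ = w and v_{h+1} = v_h − γ∇ℓ(v_h) for 0 ≤ h < H. Then ∑_{h=0}^{H−1}‖v_h − w‖² ≤ 2γ²H²(H−1)‖∇ℓ(w)‖². -/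
/-!
Write `eₕ = ‖vₕ - w‖` and `g = ‖∇ℓ(w)‖`. Each step moves by `|γ|‖∇ℓ(vₕ)‖ ≤ |γ|(g + L eₕ)`, so
`eₕ ≤ |γ|hg + |γ|L ∑_{k<h} eₖ`. Squaring and Cauchy–Schwarz give
`eₕ² ≤ 2γ²h²g² + 2γ²L²h S` with `S = ∑_{h<H} eₕ²`; summing over `h < H`,
`S ≤ γ²g²H²(H-1) + L²γ²H(H-1) S ≤ γ²g²H²(H-1) + S/2`.
-/

open Finset

theorem sum_range_natCast_eq (n : ℕ) : ∑ k ∈ range n, (k : ℝ) = n * (n - 1) / 2 := by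
  induction n with
  | zero => simp
  | succ n ih => rw [sum_range_succ, ih]; push_cast; ring

theorem sum_range_natCast_sq_le (n : ℕ) :
    ∑ k ∈ range n, (k : ℝ) ^ 2 ≤ n ^ 2 * (n - 1) / 2 := by
  induction n with
  | zero => simp
  | succ n ih =>
    rw [sum_range_succ]
    push_cast
    nlinarith [(n.cast_nonneg : (0 : ℝ) ≤ n)]

section Drift

variable {E : Type*} [NormedAddCommGroup E] [NormedSpace ℝ E]

theorem norm_iterate_sub_start_le (G : E → E) (L γ : ℝ) (w : E)
    (hG : ∀ u, ‖G u - G w‖ ≤ L * ‖u - w‖) (v : ℕ → E) (hv0 : v 0 = w)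
    (hrec : ∀ h, v (h + 1) = v h - γ • G (v h)) (h : ℕ) :
    ‖v h - w‖ ≤ ‖γ‖ * ‖G w‖ * h + ‖γ‖ * L * ∑ k ∈ range h, ‖v k - w‖ := by
  induction h with
  | zero => simp [hv0]
  | succ n ih =>
    have hGv : ‖G (v n)‖ ≤ ‖G w‖ + L * ‖v n - w‖ :=
      (norm_le_norm_add_norm_sub' _ _).trans (add_le_add_right (hG (v n)) _)
    have hstep : ‖v (n + 1) - w‖ ≤ ‖v n - w‖ + ‖γ‖ * ‖G (v n)‖ := by
      rw [hrec, sub_right_comm, ← norm_smul]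
      exact norm_sub_le _ _
    rw [sum_range_succ]
    push_cast
    nlinarith [mul_le_mul_of_nonneg_left hGv (norm_nonneg γ)]

end Drift

theorem sq_le_of_le_mul_add_sum {e : ℕ → ℝ} (he : ∀ k, 0 ≤ e k) {b c : ℝ} {h : ℕ}
    (hle : e h ≤ c * h + b * ∑ k ∈ range h, e k) :
    e h ^ 2 ≤ 2 * c ^ 2 * h ^ 2 + 2 * b ^ 2 * h * ∑ k ∈ range h, e k ^ 2 := by
  have hcs : (∑ k ∈ range h, e k) ^ 2 ≤ h * ∑ k ∈ range h, e k ^ 2 := by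
    simpa using sq_sum_le_card_mul_sum_sq (s := range h) (f := e)
  nlinarith [he h, sq_nonneg (c * h - b * ∑ k ∈ range h, e k),
    mul_le_mul_of_nonneg_left hcs (sq_nonneg b)]

theorem sum_sq_le_of_le_mul_add_sum {e : ℕ → ℝ} (he : ∀ k, 0 ≤ e k) {b c : ℝ} {H : ℕ}
    (hle : ∀ h, e h ≤ c * h + b * ∑ k ∈ range h, e k)
    (hb : b ^ 2 * H * (H - 1) ≤ 1 / 2) :
    ∑ h ∈ range H, e h ^ 2 ≤ 2 * c ^ 2 * H ^ 2 * (H - 1) := by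
  set S := ∑ h ∈ range H, e h ^ 2
  have hS : 0 ≤ S := sum_nonneg fun k _ ↦ sq_nonneg (e k)
  have hpartial : ∀ h ∈ range H, ∑ k ∈ range h, e k ^ 2 ≤ S := fun h hh ↦
    sum_le_sum_of_subset_of_nonneg (range_subset_range.mpr (mem_range.mp hh).le)
      fun k _ _ ↦ sq_nonneg (e k)
  have hsum : S ≤ 2 * c ^ 2 * ∑ h ∈ range H, (h : ℝ) ^ 2
      + 2 * b ^ 2 * S * ∑ h ∈ range H, (h : ℝ) := by
    rw [mul_sum, mul_sum, ← sum_add_distrib]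
    refine sum_le_sum fun h hh ↦ (sq_le_of_le_mul_add_sum he (hle h)).trans ?_
    have := mul_le_mul_of_nonneg_left (hpartial h hh)
      (by positivity : (0 : ℝ) ≤ 2 * b ^ 2 * h)
    linarith
  rw [sum_range_natCast_eq] at hsum
  nlinarith [mul_le_mul_of_nonneg_left (sum_range_natCast_sq_le H)
    (by positivity : (0 : ℝ) ≤ 2 * c ^ 2), mul_le_mul_of_nonneg_left hb hS]

theorem stmt_13_general (d : ℕ)
    (ℓ : EuclideanSpace ℝ (Fin d) → ℝ) (L : ℝ)
    (hsmooth : ∀ w w' : EuclideanSpace ℝ (Fin d),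
      ‖gradient ℓ w' - gradient ℓ w‖ ≤ L * ‖w' - w‖)
    (γ : ℝ) (H : ℕ)
    (hstep : L ^ 2 * γ ^ 2 * (H : ℝ) * ((H : ℝ) - 1) ≤ 1 / 2)
    (w : EuclideanSpace ℝ (Fin d)) (v : ℕ → EuclideanSpace ℝ (Fin d))
    (hv0 : v 0 = w) (hrec : ∀ h : ℕ, v (h + 1) = v h - γ • gradient ℓ (v h)) :
    ∑ h ∈ Finset.range H, ‖v h - w‖ ^ 2
      ≤ 2 * γ ^ 2 * (H : ℝ) ^ 2 * ((H : ℝ) - 1) * ‖gradient ℓ w‖ ^ 2 := by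
  have hdrift := norm_iterate_sub_start_le (gradient ℓ) L γ w (hsmooth w) v hv0 hrec
  have hb : (‖γ‖ * L) ^ 2 * H * (H - 1) ≤ 1 / 2 := by
    rw [Real.norm_eq_abs, mul_pow, sq_abs]
    linarith
  have hsum := sum_sq_le_of_le_mul_add_sum (fun k ↦ norm_nonneg (v k - w)) hdrift hb
  rw [mul_pow, Real.norm_eq_abs, sq_abs] at hsum
  linarith

/-- Lemma (drift of local gradient descent): if `ℓ` is `L`-smooth,
`L²γ²H(H-1) ≤ 1/2`, and `v₀ = w`, `v_{h+1} = v_h - γ∇ℓ(v_h)`, then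
`∑_{h<H} ‖v_h - w‖² ≤ 2γ²H²(H-1)‖∇ℓ(w)‖²`. -/
theorem stmt_13 (d : ℕ) (hd : 1 ≤ d)
    (ℓ : EuclideanSpace ℝ (Fin d) → ℝ) (L : ℝ) (hL : 0 < L)
    (hdiff : Differentiable ℝ ℓ)
    (hsmooth : ∀ w w' : EuclideanSpace ℝ (Fin d),
      ‖gradient ℓ w' - gradient ℓ w‖ ≤ L * ‖w' - w‖)
    (γ : ℝ) (hγ : 0 < γ) (H : ℕ) (hH : 1 ≤ H)
    (hstep : L ^ 2 * γ ^ 2 * (H : ℝ) * ((H : ℝ) - 1) ≤ 1 / 2)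
    (w : EuclideanSpace ℝ (Fin d)) (v : ℕ → EuclideanSpace ℝ (Fin d))
    (hv0 : v 0 = w) (hrec : ∀ h : ℕ, v (h + 1) = v h - γ • gradient ℓ (v h)) :
    ∑ h ∈ Finset.range H, ‖v h - w‖ ^ 2
      ≤ 2 * γ ^ 2 * (H : ℝ) ^ 2 * ((H : ℝ) - 1) * ‖gradient ℓ w‖ ^ 2 :=
  stmt_13_general d ℓ L hsmooth γ H hstep w v hv0 hrec
end
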